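/- For α > −1, let dμ = x_n^α dx on the upper half space. Let 𝒟 be a Lipschitz and convex domain contained in B₁⁺ = B₁ ∩ {x_n > 0} ⊂ ℝⁿ. Then there exists a constant C > 0, depending only on n, α, and the Lipschitz constant of 𝒟, such that μ(B_{2r}(x₀) ∩ 𝒟) ≤ C μ(B_r(x₀) ∩ 𝒟) for all x₀ ∈ 𝒟 and 0 < r < diam 𝒟. -/

import Mathlib

/-!
Pick a ball `ball z ρ ⊆ 𝒟` and let `D = diam 𝒟`. For `x₀ ∈ 𝒟` and `r < D`, convexity puts a
corkscrew ball inside `𝒟 ∩ ball x₀ r`: on the segment from `x₀` to `z` there is a point `y` with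
`ball y (2s) ⊆ 𝒟` and `ball y s ⊆ ball x₀ r`, where `s = rρ / (8D)`. Since `2s ≤ y_n`, the weight
`x_n^α` is comparable to `y_n^α` on `ball y s`, so `μ(ball x₀ r ∩ 𝒟) ≳ s^{n+1} y_n^α`. On the other
side, `ball x₀ (2r) ∩ {x_n > 0}` lies in a box, and integrating `u^α` (integrable at `0` because
`α > -1`) along its last side gives `μ(ball x₀ (2r) ∩ 𝒟) ≲ r^{n+1} (x₀_n + 2r)^α`. As `r ≤ (8D/ρ) s`
and `x₀_n + 2r` is comparable to `y_n`, the two bounds differ by a constant.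
-/

open MeasureTheory Metric Set
open scoped ENNReal Pointwise

theorem Real.rpow_le_rpow_abs_mul {a b K : ℝ} (α : ℝ) (hK : 0 < K) (ha : 0 < a)
    (hab : a ≤ K * b) (hba : b ≤ K * a) : b ^ α ≤ K ^ |α| * a ^ α := by
  have hb : 0 < b := pos_of_mul_pos_right (ha.trans_le hab) hK.le
  rcases le_or_gt 0 α with hα | hα
  · rw [abs_of_nonneg hα, ← Real.mul_rpow hK.le ha.le]
    exact Real.rpow_le_rpow hb.le hba hα
  · calc b ^ α ≤ (a / K) ^ α :=
          Real.rpow_le_rpow_of_nonpos (by positivity) (by rwa [div_le_iff₀' hK]) hα.le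
      _ = K ^ |α| * a ^ α := by
          rw [abs_of_neg hα, Real.div_rpow ha.le hK.le, Real.rpow_neg hK.le]; ring

theorem lintegral_Ioo_rpow_le {α a b : ℝ} (hα : -1 < α) (ha : 0 ≤ a) (hb : 0 < b) :
    ∫⁻ t in Ioo a b, ENNReal.ofReal (t ^ α) ≤ ENNReal.ofReal (b ^ (α + 1) / (α + 1)) := by
  have hint : IntegrableOn (fun t : ℝ => t ^ α) (Ioo 0 b) := by
    rw [← intervalIntegrable_iff_integrableOn_Ioo_of_le hb.le]
    exact intervalIntegral.intervalIntegrable_rpow' hα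
  have hnn : 0 ≤ᵐ[volume.restrict (Ioo 0 b)] fun t : ℝ => t ^ α := by
    filter_upwards [ae_restrict_mem measurableSet_Ioo] with t ht
    exact Real.rpow_nonneg ht.1.le α
  calc ∫⁻ t in Ioo a b, ENNReal.ofReal (t ^ α)
      ≤ ∫⁻ t in Ioo 0 b, ENNReal.ofReal (t ^ α) :=
        lintegral_mono_set (Ioo_subset_Ioo_left ha)
    _ = ENNReal.ofReal (∫ t in (0)..b, t ^ α) := by
        rw [← ofReal_integral_eq_lintegral_ofReal hint hnn, intervalIntegral.integral_of_le hb.le,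
          integral_Ioc_eq_integral_Ioo]
    _ = ENNReal.ofReal (b ^ (α + 1) / (α + 1)) := by
        rw [integral_rpow (Or.inl hα), Real.zero_rpow (by linarith), sub_zero]

theorem exists_lintegral_Ioo_rpow_le {α : ℝ} (hα : -1 < α) :
    ∃ K > 0, ∀ d h : ℝ, 0 ≤ d → 0 < h →
      ∫⁻ u in Ioo (max 0 (d - h)) (d + h), ENNReal.ofReal (u ^ α)
        ≤ ENNReal.ofReal (K * h * (d + h) ^ α) := by
  have hα₁ : 0 < α + 1 := by linarith
  refine ⟨2 * 3 ^ |α| + 3 / (α + 1), by positivity, fun d h hd hh => ?_⟩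
  have hdh : 0 < d + h := by linarith
  have hpow : 0 ≤ (d + h) ^ α := Real.rpow_nonneg hdh.le α
  have h3 : 0 ≤ 3 ^ |α| * (d + h) ^ α := by positivity
  -- Only for `α < 0` near the boundary must the singularity of `u ^ α` be integrated; otherwise
  -- `u ^ α` stays within a factor `3 ^ |α|` of `(d + h) ^ α` on the whole interval.
  by_cases hsmall : α < 0 ∧ d ≤ 2 * h
  · refine (lintegral_Ioo_rpow_le hα (le_max_left _ _) hdh).trans (ENNReal.ofReal_le_ofReal ?_)
    rw [Real.rpow_add_one hdh.ne', mul_comm, mul_div_assoc]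
    calc (d + h) * ((d + h) ^ α / (α + 1)) ≤ (3 * h) * ((d + h) ^ α / (α + 1)) := by
          gcongr; linarith
      _ ≤ (2 * 3 ^ |α| + 3 / (α + 1)) * h * (d + h) ^ α := by
          rw [add_mul, add_mul]
          have : 0 ≤ 2 * 3 ^ |α| * h * (d + h) ^ α := by positivity
          linarith [show 3 * h * ((d + h) ^ α / (α + 1)) = 3 / (α + 1) * h * (d + h) ^ α by ring]
  · have hpt : ∀ u ∈ Ioo (max 0 (d - h)) (d + h),
        ENNReal.ofReal (u ^ α) ≤ ENNReal.ofReal (3 ^ |α| * (d + h) ^ α) := by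
      rintro u ⟨hu₁, hu₂⟩
      rw [max_lt_iff] at hu₁
      refine ENNReal.ofReal_le_ofReal ?_
      rcases le_or_gt 0 α with hα₀ | hα₀
      · calc u ^ α ≤ (d + h) ^ α := Real.rpow_le_rpow hu₁.1.le hu₂.le hα₀
          _ ≤ 3 ^ |α| * (d + h) ^ α :=
              le_mul_of_one_le_left hpow (Real.one_le_rpow (by norm_num) (abs_nonneg α))
      · have : 2 * h < d := by by_contra! h'; exact hsmall ⟨hα₀, h'⟩
        exact Real.rpow_le_rpow_abs_mul α (by norm_num) hdh (by linarith) (by linarith)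
    calc ∫⁻ u in Ioo (max 0 (d - h)) (d + h), ENNReal.ofReal (u ^ α)
        ≤ ∫⁻ _ in Ioo (max 0 (d - h)) (d + h), ENNReal.ofReal (3 ^ |α| * (d + h) ^ α) :=
          setLIntegral_mono measurable_const hpt
      _ ≤ ENNReal.ofReal (3 ^ |α| * (d + h) ^ α) * ENNReal.ofReal (2 * h) := by
          rw [setLIntegral_const, Real.volume_Ioo]
          gcongr
          linarith [le_max_right 0 (d - h)]
      _ ≤ ENNReal.ofReal ((2 * 3 ^ |α| + 3 / (α + 1)) * h * (d + h) ^ α) := by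
          rw [← ENNReal.ofReal_mul h3]
          refine ENNReal.ofReal_le_ofReal ?_
          have : 0 ≤ 3 / (α + 1) * h * (d + h) ^ α := by positivity
          nlinarith

theorem Convex.combo_ball_subset {E : Type*} [NormedAddCommGroup E] [NormedSpace ℝ E]
    {s : Set E} (hs : Convex ℝ s) {x z : E} {ρ a b : ℝ} (hx : x ∈ s) (hz : ball z ρ ⊆ s)
    (ha : 0 ≤ a) (hb : 0 < b) (hab : a + b = 1) :
    ball (a • x + b • z) (b * ρ) ⊆ s :=
  calc ball (a • x + b • z) (b * ρ) = a • {x} + b • ball z ρ := by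
        rw [_root_.smul_ball hb.ne', Real.norm_of_nonneg hb.le, smul_set_singleton,
          singleton_add_ball]
    _ ⊆ a • s + b • s := by gcongr; exact singleton_subset_iff.2 hx
    _ ⊆ s := hs.set_combo_subset ha hb.le hab

theorem Convex.exists_corkscrew_ball {E : Type*} [NormedAddCommGroup E]
    [NormedSpace ℝ E] {s : Set E} (hs : Convex ℝ s) {x z : E} {ρ D r : ℝ} (hx : x ∈ s)
    (hz : ball z ρ ⊆ s) (hxz : dist x z ≤ D) (hρD : ρ ≤ D) (hr : 0 < r) (hrD : r ≤ D) :
    ∃ y, ball y (2 * (r * ρ / (8 * D))) ⊆ s ∧ ball y (r * ρ / (8 * D)) ⊆ ball x r := by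
  have hD : 0 < D := hr.trans_le hrD
  have ht : 0 < r / (4 * D) := by positivity
  have ht₁ : r / (4 * D) ≤ 1 / 4 := by
    rw [div_le_div_iff₀ (by positivity) (by norm_num)]; linarith
  refine ⟨(1 - r / (4 * D)) • x + (r / (4 * D)) • z, ?_, ?_⟩
  · rw [show 2 * (r * ρ / (8 * D)) = r / (4 * D) * ρ by field_simp; ring]
    exact hs.combo_ball_subset hx hz (by linarith) ht (by ring)
  · have hyx : dist ((1 - r / (4 * D)) • x + (r / (4 * D)) • z) x ≤ r / 4 :=
      calc _ = r / (4 * D) * dist x z := by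
            rw [dist_eq_norm, dist_eq_norm',
              show (1 - r / (4 * D)) • x + (r / (4 * D)) • z - x = (r / (4 * D)) • (z - x) by
                module, norm_smul, Real.norm_of_nonneg ht.le]
        _ ≤ r / (4 * D) * D := by gcongr
        _ = r / 4 := by field_simp
    refine ball_subset_ball' ?_
    have : r * ρ / (8 * D) ≤ r / 8 := by
      rw [div_le_div_iff₀ (by positivity) (by norm_num)]; nlinarith
    linarith

section EuclideanSpace

variable {ι : Type*} [Fintype ι]

theorem EuclideanSpace.le_apply_of_ball_subset {y : EuclideanSpace ℝ ι} {s : ℝ} {i : ι}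
    (hs : 0 < s) (hy : ball y s ⊆ {x | 0 < x i}) : s ≤ y i := by
  classical
  have hyi : 0 < y i := hy (mem_ball_self hs)
  by_contra! h
  have hmem : y - EuclideanSpace.single i (y i) ∈ ball y s := by
    rwa [mem_ball, dist_eq_norm, sub_sub_cancel_left, norm_neg, PiLp.norm_single,
      Real.norm_of_nonneg hyi.le]
  simpa using hy hmem

theorem lintegral_univ_pi_comp_eval [DecidableEq ι] (i : ι) {g : ℝ → ℝ≥0∞} (hg : Measurable g)
    (I : ι → Set ℝ) :
    ∫⁻ x in univ.pi I, g (x i) = (∏ j ∈ Finset.univ.erase i, volume (I j)) * ∫⁻ t in I i, g t := by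
  rw [volume_pi, Measure.restrict_pi_pi, ← lintegral_map hg (measurable_pi_apply i),
    Measure.pi_map_eval, lintegral_smul_measure, smul_eq_mul]
  simp only [Measure.restrict_apply_univ]

/-- Only the restriction to `{x | 0 < x i}` is meaningful: `x i ^ α` is a junk value of
`Real.rpow` where `x i < 0`. -/
noncomputable def weightedVolume (i : ι) (α : ℝ) : Measure (EuclideanSpace ℝ ι) :=
  volume.withDensity fun x => ENNReal.ofReal (x i ^ α)

theorem weightedVolume_ball_inter_le_mul_lintegral (i : ι) (α : ℝ) (x₀ : EuclideanSpace ℝ ι)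
    (h : ℝ) :
    weightedVolume i α (ball x₀ h ∩ {x | 0 < x i})
      ≤ ENNReal.ofReal (2 * h) ^ (Fintype.card ι - 1)
        * ∫⁻ u in Ioo (max 0 (x₀ i - h)) (x₀ i + h), ENNReal.ofReal (u ^ α) := by
  classical
  set I : ι → Set ℝ := Function.update (fun j => Ioo (x₀ j - h) (x₀ j + h)) i
    (Ioo (max 0 (x₀ i - h)) (x₀ i + h))
  have hbox : ball x₀ h ∩ {x | 0 < x i} ⊆ WithLp.ofLp ⁻¹' univ.pi I := by
    rintro x ⟨hx, hxi⟩ j -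
    have hj : |x j - x₀ j| < h := (PiLp.dist_apply_le x x₀ j).trans_lt hx
    rw [abs_lt] at hj
    rcases eq_or_ne j i with rfl | hji
    · simp only [I, Function.update_self]
      exact ⟨max_lt hxi (by linarith), by linarith⟩
    · simp only [I, Function.update_of_ne hji]
      exact ⟨by linarith, by linarith⟩
  have hg : Measurable fun u : ℝ => ENNReal.ofReal (u ^ α) := by fun_prop
  calc weightedVolume i α (ball x₀ h ∩ {x | 0 < x i})
      ≤ weightedVolume i α (WithLp.ofLp ⁻¹' univ.pi I) := measure_mono hbox
    _ = ∫⁻ x in univ.pi I, ENNReal.ofReal (x i ^ α) := by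
        have hI : MeasurableSet (univ.pi I) := MeasurableSet.univ_pi fun j => by
          rcases eq_or_ne j i with rfl | hji <;> simp [I, *]
        rw [weightedVolume, withDensity_apply _ (hI.preimage (by fun_prop))]
        exact (PiLp.volume_preserving_ofLp ι).setLIntegral_comp_preimage_emb
          (MeasurableEquiv.toLp 2 (ι → ℝ)).symm.measurableEmbedding
          (fun x => ENNReal.ofReal (x i ^ α)) _
    _ = (∏ j ∈ Finset.univ.erase i, volume (I j)) * ∫⁻ t in I i, ENNReal.ofReal (t ^ α) :=
        lintegral_univ_pi_comp_eval i hg I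
    _ = _ := by
        congr 1
        · rw [Finset.prod_congr rfl (g := fun _ => ENNReal.ofReal (2 * h)) fun j hj => ?_,
            Finset.prod_const, Finset.card_erase_of_mem (Finset.mem_univ i), Finset.card_univ]
          simp only [I, Function.update_of_ne (Finset.ne_of_mem_erase hj), Real.volume_Ioo]
          ring_nf
        · simp [I]

theorem exists_weightedVolume_ball_inter_le (i : ι) {α : ℝ} (hα : -1 < α) :
    ∃ K > 0, ∀ (x₀ : EuclideanSpace ℝ ι) (h : ℝ), 0 ≤ x₀ i → 0 < h →
      weightedVolume i α (ball x₀ h ∩ {x | 0 < x i})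
        ≤ ENNReal.ofReal (K * h ^ Fintype.card ι * (x₀ i + h) ^ α) := by
  have : Nonempty ι := ⟨i⟩
  obtain ⟨K, hK, hint⟩ := exists_lintegral_Ioo_rpow_le hα
  obtain ⟨m, hm⟩ : ∃ m, Fintype.card ι = m + 1 :=
    Nat.exists_eq_succ_of_ne_zero Fintype.card_ne_zero
  refine ⟨2 ^ (m + 1) * K, by positivity, fun x₀ h hx₀ hh => ?_⟩
  have hX : 0 ≤ (2 * h) ^ m * (K * h * (x₀ i + h) ^ α) := by
    have := Real.rpow_nonneg (show 0 ≤ x₀ i + h by linarith) α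
    positivity
  calc weightedVolume i α (ball x₀ h ∩ {x | 0 < x i})
      ≤ ENNReal.ofReal (2 * h) ^ m
        * ∫⁻ u in Ioo (max 0 (x₀ i - h)) (x₀ i + h), ENNReal.ofReal (u ^ α) := by
        simpa [hm] using weightedVolume_ball_inter_le_mul_lintegral i α x₀ h
    _ ≤ ENNReal.ofReal (2 * h) ^ m * ENNReal.ofReal (K * h * (x₀ i + h) ^ α) := by
        gcongr; exact hint _ _ hx₀ hh
    _ = ENNReal.ofReal ((2 * h) ^ m * (K * h * (x₀ i + h) ^ α)) := by
        rw [← ENNReal.ofReal_pow (by positivity), ← ENNReal.ofReal_mul (by positivity)]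
    _ ≤ ENNReal.ofReal (2 ^ (m + 1) * K * h ^ Fintype.card ι * (x₀ i + h) ^ α) := by
        refine ENNReal.ofReal_le_ofReal ?_
        rw [hm, show 2 ^ (m + 1) * K * h ^ (m + 1) * (x₀ i + h) ^ α
          = 2 * ((2 * h) ^ m * (K * h * (x₀ i + h) ^ α)) by ring]
        linarith

theorem exists_ofReal_le_weightedVolume_ball (i : ι) (α : ℝ) :
    ∃ c > 0, ∀ (y : EuclideanSpace ℝ ι) (s : ℝ), 0 < s → 2 * s ≤ y i →
      ENNReal.ofReal (c * s ^ Fintype.card ι * y i ^ α) ≤ weightedVolume i α (ball y s) := by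
  have : Nonempty ι := ⟨i⟩
  have hV : volume (ball (0 : EuclideanSpace ℝ ι) 1) ≠ ⊤ := measure_ball_lt_top.ne
  refine ⟨(volume (ball (0 : EuclideanSpace ℝ ι) 1)).toReal / 2 ^ |α|,
    div_pos (ENNReal.toReal_pos (measure_ball_pos _ _ one_pos).ne' hV) (by positivity),
    fun y s hs hsy => ?_⟩
  have hy : 0 < y i := by linarith
  have hpt : ∀ w ∈ ball y s, ENNReal.ofReal (y i ^ α / 2 ^ |α|) ≤ ENNReal.ofReal (w i ^ α) := by
    intro w hw
    have hwy : |w i - y i| < s := (PiLp.dist_apply_le w y i).trans_lt hw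
    rw [abs_lt] at hwy
    refine ENNReal.ofReal_le_ofReal ((div_le_iff₀' (by positivity)).2 ?_)
    exact Real.rpow_le_rpow_abs_mul α two_pos (by linarith) (by linarith) (by linarith)
  calc ENNReal.ofReal ((volume (ball (0 : EuclideanSpace ℝ ι) 1)).toReal / 2 ^ |α|
          * s ^ Fintype.card ι * y i ^ α)
      = ENNReal.ofReal (y i ^ α / 2 ^ |α|) * volume (ball y s) := by
        rw [show (volume (ball (0 : EuclideanSpace ℝ ι) 1)).toReal / 2 ^ |α|
            * s ^ Fintype.card ι * y i ^ α = y i ^ α / 2 ^ |α| * s ^ Fintype.card ι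
            * (volume (ball (0 : EuclideanSpace ℝ ι) 1)).toReal by ring,
          ENNReal.ofReal_mul (by positivity), ENNReal.ofReal_toReal hV,
          Measure.addHaar_ball _ _ hs.le, finrank_euclideanSpace,
          ENNReal.ofReal_mul (by positivity), mul_assoc]
    _ = ∫⁻ _ in ball y s, ENNReal.ofReal (y i ^ α / 2 ^ |α|) := (setLIntegral_const _ _).symm
    _ ≤ ∫⁻ w in ball y s, ENNReal.ofReal (w i ^ α) := setLIntegral_mono (by fun_prop) hpt
    _ = weightedVolume i α (ball y s) := (withDensity_apply _ measurableSet_ball).symm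

theorem exists_weightedVolume_ball_inter_le_of_corkscrew (i : ι) {α : ℝ} (hα : -1 < α)
    {κ : ℝ} (hκ : 0 < κ) :
    ∃ C > 0, ∀ U : Set (EuclideanSpace ℝ ι), U ⊆ {x | 0 < x i} → ∀ x₀ ∈ U,
      ∀ (r s : ℝ) (y : EuclideanSpace ℝ ι), 0 < s → r ≤ κ * s →
        ball y (2 * s) ⊆ U → ball y s ⊆ ball x₀ r →
          weightedVolume i α (ball x₀ (2 * r) ∩ U)
            ≤ ENNReal.ofReal C * weightedVolume i α (ball x₀ r ∩ U) := by
  obtain ⟨K, hK, hupper⟩ := exists_weightedVolume_ball_inter_le i hα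
  obtain ⟨c, hc, hlower⟩ := exists_ofReal_le_weightedVolume_ball i α
  set N := Fintype.card ι
  set L := 1 + 3 * κ
  refine ⟨K * L ^ |α| * (2 * κ) ^ N / c, by positivity, ?_⟩
  intro U hU x₀ hx₀ r s y hs hrs h2s hsr
  have hx₀i : 0 < x₀ i := hU hx₀
  have hyx₀ : |y i - x₀ i| < r := (PiLp.dist_apply_le y x₀ i).trans_lt (hsr (mem_ball_self hs))
  have hsy : 2 * s ≤ y i := EuclideanSpace.le_apply_of_ball_subset (by positivity) (h2s.trans hU)
  have hr : 0 < r := (abs_nonneg _).trans_lt hyx₀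
  rw [abs_lt] at hyx₀
  have hcomp : (x₀ i + 2 * r) ^ α ≤ L ^ |α| * y i ^ α :=
    Real.rpow_le_rpow_abs_mul α (by positivity) (by linarith) (by nlinarith) (by nlinarith)
  calc weightedVolume i α (ball x₀ (2 * r) ∩ U)
      ≤ weightedVolume i α (ball x₀ (2 * r) ∩ {x | 0 < x i}) := by gcongr
    _ ≤ ENNReal.ofReal (K * (2 * r) ^ N * (x₀ i + 2 * r) ^ α) :=
        hupper x₀ (2 * r) hx₀i.le (by positivity)
    _ ≤ ENNReal.ofReal (K * L ^ |α| * (2 * κ) ^ N / c * (c * s ^ N * y i ^ α)) := by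
        refine ENNReal.ofReal_le_ofReal ?_
        calc K * (2 * r) ^ N * (x₀ i + 2 * r) ^ α
            ≤ K * (2 * (κ * s)) ^ N * (L ^ |α| * y i ^ α) := by gcongr
          _ = K * L ^ |α| * (2 * κ) ^ N / c * (c * s ^ N * y i ^ α) := by
              field_simp; ring
    _ = ENNReal.ofReal (K * L ^ |α| * (2 * κ) ^ N / c)
          * ENNReal.ofReal (c * s ^ N * y i ^ α) := ENNReal.ofReal_mul (by positivity)
    _ ≤ ENNReal.ofReal (K * L ^ |α| * (2 * κ) ^ N / c) * weightedVolume i α (ball y s) := by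
        gcongr; exact hlower y s hs hsy
    _ ≤ ENNReal.ofReal (K * L ^ |α| * (2 * κ) ^ N / c) * weightedVolume i α (ball x₀ r ∩ U) := by
        gcongr
        exact subset_inter hsr ((ball_subset_ball (by linarith)).trans h2s)

end EuclideanSpace

/-- For `α > −1` let `dμ = x_n^α dx`. If `𝒟` is a Lipschitz (here: open,
bounded, nonempty) convex domain contained in the upper half ball `B₁⁺`, then there is
`C > 0` such that `μ(B_{2r}(x₀) ∩ 𝒟) ≤ C μ(B_r(x₀) ∩ 𝒟)` for all `x₀ ∈ 𝒟` and
`0 < r < diam 𝒟`. -/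
theorem doubling_weighted_measure (n : ℕ) (α : ℝ) (hα : -1 < α)
    (𝒟 : Set (EuclideanSpace ℝ (Fin (n+1))))
    (h𝒟conv : Convex ℝ 𝒟) (h𝒟open : IsOpen 𝒟) (h𝒟ne : 𝒟.Nonempty)
    (h𝒟sub : 𝒟 ⊆ ball 0 1 ∩ {x : EuclideanSpace ℝ (Fin (n+1)) | 0 < x (Fin.last n)}) :
    ∃ C > (0:ℝ), ∀ x₀ ∈ 𝒟, ∀ r : ℝ, 0 < r → r < Metric.diam 𝒟 →
      (volume.withDensity fun x : EuclideanSpace ℝ (Fin (n+1)) =>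
          ENNReal.ofReal (x (Fin.last n) ^ α)) (ball x₀ (2*r) ∩ 𝒟)
        ≤ ENNReal.ofReal C *
          (volume.withDensity fun x : EuclideanSpace ℝ (Fin (n+1)) =>
            ENNReal.ofReal (x (Fin.last n) ^ α)) (ball x₀ r ∩ 𝒟) := by
  obtain ⟨z, hz⟩ := h𝒟ne
  obtain ⟨ρ, hρ, hzρ⟩ := Metric.isOpen_iff.1 h𝒟open z hz
  have hbdd : Bornology.IsBounded 𝒟 := isBounded_ball.subset fun x hx => (h𝒟sub hx).1
  have hρD : ρ ≤ diam 𝒟 := by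
    linarith [(diam_ball_eq z hρ.le).symm.trans_le (diam_mono hzρ hbdd)]
  have hD : 0 < diam 𝒟 := hρ.trans_le hρD
  obtain ⟨C, hC, hdoubling⟩ := exists_weightedVolume_ball_inter_le_of_corkscrew (Fin.last n) hα
    (κ := 8 * diam 𝒟 / ρ) (by positivity)
  refine ⟨C, hC, fun x₀ hx₀ r hr hrD => ?_⟩
  obtain ⟨y, h2s, hs⟩ := h𝒟conv.exists_corkscrew_ball hx₀ hzρ
    (dist_le_diam_of_mem hbdd hx₀ hz) hρD hr hrD.le
  exact hdoubling 𝒟 (fun x hx => (h𝒟sub hx).2) x₀ hx₀ r _ y (by positivity)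
    (le_of_eq (by field_simp)) h2s hs
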